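/- arXiv:1811.02211 — 2 statements merged into one kernel-verified Lean document; each statement's English description precedes it below -/
import Mathlib

section
/- Let K be a field with char K ≠ 2, and let L be the 3-dimensional Lie algebra over K with basis u, v, w and brackets [u,v] = -2w, [u,w] = u, [v,w] = -v (and [u,u]=[v,v]=[w,w]=0). Then L is isomorphic to sl(2, K); in particular L is not solvable. -/
/-!
Both `L` and `sl(2, K)` have a basis satisfying the same relations: in `sl(2, K)` take
`u = f`, `v = e`, `w = h / 2` for the standard triple `e, f, h`, which is possible as `2` is
invertible. Matching the two bases is then a linear isomorphism, and it preserves brackets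
because the brackets of basis vectors agree. The relations also exhibit each basis vector as a
bracket (`u = ⁅u, w⁆`, `v = ⁅v, -w⁆`, `w = ⁅-u / 2, v⁆`), so `L` is perfect and hence, being
nonzero, not solvable.
-/

open LieAlgebra.SpecialLinear

section

variable {R L L' ι : Type*} [CommRing R] [LieRing L] [LieAlgebra R L] [LieRing L']
  [LieAlgebra R L']

theorem LinearMap.map_lie_of_basis [LinearOrder ι] (f : L →ₗ[R] L') (b : Module.Basis ι R L)
    (h : ∀ i j, i < j → f ⁅b i, b j⁆ = ⁅f (b i), f (b j)⁆) (x y : L) :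
    f ⁅x, y⁆ = ⁅f x, f y⁆ := by
  have key : (LieModule.toEnd R L L : L →ₗ[R] Module.End R L).compr₂ f =
      (LieModule.toEnd R L' L' : L' →ₗ[R] Module.End R L').compl₁₂ f f := by
    refine LinearMap.ext_basis b b fun i j => ?_
    simp only [LinearMap.compr₂_apply, LinearMap.compl₁₂_apply, LieHom.coe_toLinearMap,
      LieModule.toEnd_apply_apply]
    rcases lt_trichotomy i j with hij | rfl | hji
    · exact h i j hij
    · simp
    · rw [← lie_skew, map_neg, h j i hji, lie_skew]
  exact LinearMap.congr_fun₂ key x y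

/-- The relations of the basis `u, v, w` of the first Hochschild cohomology of the Kronecker
algebra. -/
structure IsKroneckerTriple (R : Type*) [CommRing R] [LieAlgebra R L] (u v w : L) : Prop where
  lie_u_v : ⁅u, v⁆ = (-2 : R) • w
  lie_u_w : ⁅u, w⁆ = u
  lie_v_w : ⁅v, w⁆ = -v

namespace IsKroneckerTriple

variable {u v w : L} {u' v' w' : L'}

noncomputable def lieEquiv (t : IsKroneckerTriple R u v w) (t' : IsKroneckerTriple R u' v' w')
    (b : Module.Basis (Fin 3) R L) (hb : ⇑b = ![u, v, w])
    (b' : Module.Basis (Fin 3) R L') (hb' : ⇑b' = ![u', v', w']) : L ≃ₗ⁅R⁆ L' :=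
  let e := b.equiv b' (Equiv.refl _)
  have he : ∀ i, e (b i) = b' i := fun i => b.equiv_apply i b' (Equiv.refl _)
  have hu : e u = u' := by simpa [hb, hb'] using he 0
  have hv : e v = v' := by simpa [hb, hb'] using he 1
  have hw : e w = w' := by simpa [hb, hb'] using he 2
  { e with
    map_lie' := fun {x y} => LinearMap.map_lie_of_basis (e : L →ₗ[R] L') b (fun i j hij => by
      fin_cases i <;> fin_cases j <;> first
        | exact absurd hij (by decide)
        | simp [hb, t.lie_u_v, t.lie_u_w, t.lie_v_w, t'.lie_u_v, t'.lie_u_w, t'.lie_v_w,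
          hu, hv, hw]) x y }

theorem derivedSeries_one_eq_top [Invertible (2 : R)] (t : IsKroneckerTriple R u v w)
    (hsp : Submodule.span R {u, v, w} = ⊤) : LieAlgebra.derivedSeries R L 1 = ⊤ := by
  refine eq_top_iff.mpr fun x _ => ?_
  have hx : x ∈ Submodule.span R {u, v, w} := hsp ▸ Submodule.mem_top
  change x ∈ (LieIdeal.toLieSubalgebra R L (LieAlgebra.derivedSeries R L 1)).toSubmodule
  rw [LieAlgebra.coe_derivedSeries_one_eq]
  refine Submodule.span_mono ?_ hx
  simp only [Set.insert_subset_iff, Set.singleton_subset_iff]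
  refine ⟨⟨u, w, t.lie_u_w⟩, ⟨v, -w, by rw [lie_neg, t.lie_v_w, neg_neg]⟩, ⟨(-⅟2 : R) • u, v, ?_⟩⟩
  rw [smul_lie, t.lie_u_v, smul_smul, neg_mul_neg, invOf_mul_self, one_smul]

theorem not_isSolvable [Invertible (2 : R)] [Nontrivial L] (t : IsKroneckerTriple R u v w)
    (hsp : Submodule.span R {u, v, w} = ⊤) : ¬ LieAlgebra.IsSolvable L := fun _ =>
  (LieAlgebra.derivedSeries_lt_top_of_solvable R L).ne (t.derivedSeries_one_eq_top hsp)

end IsKroneckerTriple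

end

section

variable {R : Type*} [CommRing R] [Invertible (2 : R)]

theorem isKroneckerTriple_sl_two :
    IsKroneckerTriple R (single 1 0 (by decide) (1 : R) : sl (Fin 2) R) (single 0 1 (by decide) 1)
      (singleSubSingle 0 1 ⅟2) := by
  constructor <;> ext i j <;> fin_cases i <;> fin_cases j <;>
    simp [Ring.lie_def, Matrix.mul_apply, Matrix.single_apply, ← neg_add', invOf_two_add_invOf_two]

theorem linearIndependent_sl_two :
    LinearIndependent R ![(single 1 0 (by decide) (1 : R) : sl (Fin 2) R), single 0 1 (by decide) 1,
      singleSubSingle 0 1 ⅟2] := by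
  refine Fintype.linearIndependent_iff.mpr fun g hg => ?_
  have h10 : g 0 = 0 := by simpa [Fin.sum_univ_three] using congr(($hg).val 1 0)
  have h01 : g 1 = 0 := by simpa [Fin.sum_univ_three] using congr(($hg).val 0 1)
  have h00 : g 2 * ⅟2 = 0 := by simpa [Fin.sum_univ_three] using congr(($hg).val 0 0)
  intro i
  fin_cases i
  · exact h10
  · exact h01
  · exact (isUnit_of_invertible _).mul_left_eq_zero.mp h00

theorem span_sl_two :
    Submodule.span R (Set.range ![(single 1 0 (by decide) (1 : R) : sl (Fin 2) R),
      single 0 1 (by decide) 1, singleSubSingle 0 1 ⅟2]) = ⊤ := by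
  refine eq_top_iff.mpr fun A _ => (Submodule.mem_span_range_iff_exists_fun R).mpr
    ⟨![A.val 1 0, A.val 0 1, A.val 0 0 * 2], ?_⟩
  have htr : A.val 1 1 = -A.val 0 0 :=
    eq_neg_of_add_eq_zero_right ((Matrix.trace_fin_two A.val).symm.trans A.2)
  ext i j
  fin_cases i <;> fin_cases j <;> simp [Fin.sum_univ_three, htr]

end

/-- over a field of characteristic ≠ 2, the 3-dimensional Lie algebra with basis
`u, v, w` and brackets `[u,v] = -2w`, `[u,w] = u`, `[v,w] = -v` is isomorphic to `sl(2,K)`;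
in particular it is not solvable. -/
theorem stmt_11 (K : Type*) [Field K] (h2 : (2 : K) ≠ 0)
    (L : Type*) [LieRing L] [LieAlgebra K L] (u v w : L)
    (hli : LinearIndependent K ![u, v, w])
    (hsp : Submodule.span K {u, v, w} = ⊤)
    (huv : ⁅u, v⁆ = (-2 : K) • w) (huw : ⁅u, w⁆ = u) (hvw : ⁅v, w⁆ = -v) :
    Nonempty (L ≃ₗ⁅K⁆ LieAlgebra.SpecialLinear.sl (Fin 2) K) ∧
      ¬ LieAlgebra.IsSolvable L := by
  have : Invertible (2 : K) := invertibleOfNonzero h2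
  have : Nontrivial L := nontrivial_of_ne u 0 (hli.ne_zero 0)
  have hL : IsKroneckerTriple K u v w := ⟨huv, huw, hvw⟩
  have hspan : Submodule.span K (Set.range ![u, v, w]) = ⊤ := by
    rw [Matrix.range_cons, Matrix.range_cons, Matrix.range_cons_empty, ← Set.insert_eq,
      ← Set.insert_eq, hsp]
  let b := Module.Basis.mk hli hspan.ge
  let b' := Module.Basis.mk linearIndependent_sl_two (span_sl_two (R := K)).ge
  exact ⟨⟨hL.lieEquiv isKroneckerTriple_sl_two b (Module.Basis.coe_mk _ _) b'
    (Module.Basis.coe_mk _ _)⟩, hL.not_isSolvable hsp⟩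
end

section
/- Let L be a Lie algebra over a field K that decomposes as a vector space L = Z ⊕ H ⊕ P where Z and P are abelian Lie subalgebras, M := Z ⊕ H is a Lie subalgebra, [M, P] ⊆ P, and [P, P] ⊆ M. If both M and M ⊕ [P,P] are solvable as Lie subalgebras, then L is solvable. -/
/-!
Since `L = M + P` and `[M, P] ⊆ P`, the normalizer of `P` is all of `L`, so `P` is an abelian
ideal. The quotient `L ⧸ P` is an image of `M`, hence solvable, and an extension of a solvable
Lie algebra by a solvable ideal is solvable.
-/

open LieAlgebra

section

variable {R L L' : Type*} [CommRing R] [LieRing L] [LieAlgebra R L] [LieRing L'] [LieAlgebra R L']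

namespace LieSubmodule.Quotient

variable (I : LieIdeal R L)

def mkLieHom : L →ₗ⁅R⁆ L ⧸ I :=
  { (mk' I : L →ₗ[R] L ⧸ I) with map_lie' := rfl }

lemma ker_mkLieHom : (mkLieHom I).ker = I := by
  ext x
  exact mk_eq_zero (N := I)

lemma surjective_mkLieHom : Function.Surjective (mkLieHom I) := surjective_mk' I

lemma surjective_mkLieHom_comp_incl {M : LieSubalgebra R L}
    (h : M.toSubmodule ⊔ (I : LieSubalgebra R L).toSubmodule = ⊤) :
    Function.Surjective ((mkLieHom I).comp M.incl) := by
  intro c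
  obtain ⟨x, rfl⟩ := surjective_mkLieHom I c
  obtain ⟨m, hm, p, hp, rfl⟩ := Submodule.mem_sup.mp (h ▸ Submodule.mem_top : x ∈ _)
  refine ⟨⟨m, hm⟩, ?_⟩
  have hp0 : mkLieHom I p = 0 := (mk_eq_zero (N := I)).mpr hp
  show mkLieHom I m = mkLieHom I (m + p)
  rw [map_add, hp0, add_zero]

end LieSubmodule.Quotient

theorem LieAlgebra.isSolvable_of_isSolvable_ker (f : L →ₗ⁅R⁆ L') [IsSolvable L']
    [IsSolvable f.ker] : IsSolvable L := by
  obtain ⟨n, hn⟩ := IsSolvable.solvable R L'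
  obtain ⟨k, hk⟩ := IsSolvable.solvable R f.ker
  have hle : derivedSeries R L n ≤ f.ker :=
    LieIdeal.map_eq_bot_iff.mp (le_bot_iff.mp (hn ▸ LieIdeal.derivedSeries_map_le (f := f) n))
  refine IsSolvable.mk (R := R) (k := k + n) (le_bot_iff.mp ?_)
  calc derivedSeries R L (k + n) = derivedSeriesOfIdeal R L k (derivedSeries R L n) := by
        rw [derivedSeries_def, derivedSeriesOfIdeal_add]
    _ ≤ derivedSeriesOfIdeal R L k f.ker := derivedSeriesOfIdeal_mono hle k
    _ = ⊥ := (LieIdeal.derivedSeries_eq_bot_iff f.ker k).mp hk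

theorem LieAlgebra.isSolvable_of_isSolvable_quotient (I : LieIdeal R L) [IsSolvable I]
    [IsSolvable (L ⧸ I)] : IsSolvable L := by
  have : IsSolvable (LieSubmodule.Quotient.mkLieHom I).ker := by
    rwa [LieSubmodule.Quotient.ker_mkLieHom]
  exact isSolvable_of_isSolvable_ker (LieSubmodule.Quotient.mkLieHom I)

lemma LieSubalgebra.lie_mem_of_le_normalizer {M P : LieSubalgebra R L} (hMP : M ≤ P.normalizer)
    (htop : M.toSubmodule ⊔ P.toSubmodule = ⊤) (x : L) {y : L} (hy : y ∈ P) : ⁅x, y⁆ ∈ P := by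
  have hx : x ∈ P.normalizer := by
    have : M.toSubmodule ⊔ P.toSubmodule ≤ P.normalizer.toSubmodule :=
      sup_le hMP P.le_normalizer
    exact this (htop ▸ Submodule.mem_top)
  exact (P.mem_normalizer_iff x).mp hx y hy

end

theorem stmt_15_general (K : Type*) [Field K] (L : Type*) [LieRing L] [LieAlgebra K L]
    (Z M P : LieSubalgebra K L) (H : Submodule K L)
    (hPab : IsLieAbelian P)
    (hM : M.toSubmodule = Z.toSubmodule ⊔ H)
    (htop : Z.toSubmodule ⊔ H ⊔ P.toSubmodule = ⊤)
    (hMP : ∀ x ∈ M, ∀ y ∈ P, ⁅x, y⁆ ∈ P)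
    (hMsolv : LieAlgebra.IsSolvable M) :
    LieAlgebra.IsSolvable L := by
  have hMPtop : M.toSubmodule ⊔ P.toSubmodule = ⊤ := hM ▸ htop
  have hMnorm : M ≤ P.normalizer := fun m hm ↦ (P.mem_normalizer_iff m).mpr (hMP m hm)
  obtain ⟨I, rfl⟩ := (LieSubalgebra.exists_lieIdeal_coe_eq_iff K P).mpr fun x _ ↦
    LieSubalgebra.lie_mem_of_le_normalizer hMnorm hMPtop x
  have : IsLieAbelian I := hPab
  have : IsSolvable (L ⧸ I) :=
    (LieSubmodule.Quotient.surjective_mkLieHom_comp_incl I hMPtop).lieAlgebra_isSolvable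
  exact isSolvable_of_isSolvable_quotient I

/-- a Lie algebra `L = Z ⊕ H ⊕ P` (as a vector space) with `Z, P` abelian Lie
subalgebras, `M := Z ⊕ H` a Lie subalgebra, `[M,P] ⊆ P`, `[P,P] ⊆ M`, such that `M` and
`M ⊕ [P,P]` are solvable, is itself solvable. -/
theorem stmt_15 (K : Type*) [Field K] (L : Type*) [LieRing L] [LieAlgebra K L]
    (Z M P : LieSubalgebra K L) (H : Submodule K L)
    (hZab : IsLieAbelian Z) (hPab : IsLieAbelian P)
    (hM : M.toSubmodule = Z.toSubmodule ⊔ H)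
    (hZH : Z.toSubmodule ⊓ H = ⊥)
    (hMPdisj : (Z.toSubmodule ⊔ H) ⊓ P.toSubmodule = ⊥)
    (htop : Z.toSubmodule ⊔ H ⊔ P.toSubmodule = ⊤)
    (hMP : ∀ x ∈ M, ∀ y ∈ P, ⁅x, y⁆ ∈ P)
    (hPP : ∀ x ∈ P, ∀ y ∈ P, ⁅x, y⁆ ∈ M)
    (hMsolv : LieAlgebra.IsSolvable M)
    (hN : ∀ N : LieSubalgebra K L,
      N.toSubmodule =
        M.toSubmodule ⊔ Submodule.span K {z : L | ∃ x ∈ P, ∃ y ∈ P, z = ⁅x, y⁆} →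
      LieAlgebra.IsSolvable N) :
    LieAlgebra.IsSolvable L :=
  stmt_15_general K L Z M P H hPab hM htop hMP hMsolv
end
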